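/- arXiv:2511.13736 — 5 statements merged into one kernel-verified Lean document; each statement's English description precedes it below -/
import Mathlib

section
/- Let m ≥ 2 and let p, r, s ∈ (0,1) with p + r + s = 1 be the probabilities with which each player plays P, R, S respectively in a symmetric strategy of the imbalanced (m,3)-RPS. If the expected payoff of playing P equals 0 (the value of the symmetric Nash equilibrium), then (p+r)^m = p + r^m. -/
theorem stmt_2 (m : ℕ) (hm : 2 ≤ m) (p r s : ℝ)
    (hp : p ∈ Set.Ioo (0:ℝ) 1) (hr : r ∈ Set.Ioo (0:ℝ) 1) (hs : s ∈ Set.Ioo (0:ℝ) 1)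
    (hsum : p + r + s = 1)
    (hE : ∑ i ∈ Finset.Icc 1 (m - 1),
        (((m : ℝ) - i) / i) * p ^ (i - 1) * r ^ (m - i) * ((m - 1).choose (i - 1))
      - (1 - (1 - s) ^ (m - 1)) = 0) :
    (p + r) ^ m = p + r ^ m := by
  obtain ⟨k, rfl⟩ : ∃ k, m = k + 2 := ⟨m - 2, by omega⟩
  have hps : 1 - s = p + r := by linarith
  rw [hps] at hE
  have hp0 : p ≠ 0 := ne_of_gt hp.1
  have hIcc : Finset.Icc 1 (k + 2 - 1) = Finset.Ico 1 (k + 2) := by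
    exact (Finset.Ico_add_one_right_eq_Icc (a := 1) (b := k + 1)).symm
  rw [hIcc, Finset.sum_Ico_eq_sum_range] at hE
  have hrange : k + 2 - 1 = k + 1 := rfl
  rw [hrange] at hE
  have hterm : ∀ j ∈ Finset.range (k+1),
      (((k+2 : ℕ) : ℝ) - ((1+j : ℕ):ℝ)) / ((1+j:ℕ):ℝ) * p ^ (1+j-1) * r ^ (k+2-(1+j))
        * (((k+1).choose (1+j-1) : ℕ) : ℝ)
      = ((k+2).choose (j+1) : ℝ) * (p ^ j * r ^ (k+1-j))
        - ((k+1).choose j : ℝ) * (p ^ j * r ^ (k+1-j)) := by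
    intro j hj
    have h1 : 1 + j - 1 = j := by omega
    have h2 : k + 2 - (1+j) = k + 1 - j := by omega
    rw [h1, h2]
    have key : ((k+2 : ℕ) : ℝ) * ((k+1).choose j : ℝ)
        = ((k+2).choose (j+1) : ℝ) * ((j+1 : ℕ) : ℝ) :=
      by exact_mod_cast congrArg (Nat.cast : ℕ → ℝ) (Nat.add_one_mul_choose_eq (k+1) j)
    have hj0 : ((1+j : ℕ) : ℝ) ≠ 0 := by positivity
    have hcoef : (((k+2 : ℕ) : ℝ) - ((1+j : ℕ):ℝ)) / ((1+j:ℕ):ℝ) * ((k+1).choose j : ℝ)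
        = ((k+2).choose (j+1) : ℝ) - ((k+1).choose j : ℝ) := by
      field_simp
      push_cast at key ⊢
      linarith [key]
    calc (((k+2 : ℕ) : ℝ) - ((1+j : ℕ):ℝ)) / ((1+j:ℕ):ℝ) * p ^ j * r ^ (k+1-j)
          * (((k+1).choose j : ℕ) : ℝ)
        = ((((k+2 : ℕ) : ℝ) - ((1+j : ℕ):ℝ)) / ((1+j:ℕ):ℝ) * ((k+1).choose j : ℝ))
            * (p ^ j * r ^ (k+1-j)) := by ring
      _ = _ := by rw [hcoef]; ring
  rw [Finset.sum_congr rfl hterm, Finset.sum_sub_distrib] at hE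
  -- S2 identity
  have hS2 : ∑ j ∈ Finset.range (k+1), ((k+1).choose j : ℝ) * (p ^ j * r ^ (k+1-j))
      = (p+r)^(k+1) - p^(k+1) := by
    have h := add_pow p r (k+1)
    rw [Finset.sum_range_succ] at h
    simp only [Nat.choose_self, Nat.cast_one, Nat.sub_self, pow_zero, mul_one] at h
    rw [h]
    have : ∀ j ∈ Finset.range (k+1), p ^ j * r ^ (k+1-j) * (((k+1).choose j : ℕ):ℝ)
        = ((k+1).choose j : ℝ) * (p ^ j * r ^ (k+1-j)) := by intro j hj; ring
    rw [Finset.sum_congr rfl this]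
    ring
  -- S1 identity
  have hS1 : p * ∑ j ∈ Finset.range (k+1), ((k+2).choose (j+1) : ℝ) * (p ^ j * r ^ (k+1-j))
      = (p+r)^(k+2) - p^(k+2) - r^(k+2) := by
    have h := add_pow p r (k+2)
    rw [Finset.sum_range_succ, Finset.sum_range_succ'] at h
    simp only [Nat.choose_self, Nat.choose_zero_right, Nat.cast_one, Nat.sub_self,
      pow_zero, mul_one, one_mul, Nat.sub_zero] at h
    rw [Finset.mul_sum]
    have : ∀ j ∈ Finset.range (k+1), p * (((k+2).choose (j+1) : ℝ) * (p ^ j * r ^ (k+1-j)))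
        = p ^ (j+1) * r ^ (k+2-(j+1)) * (((k+2).choose (j+1) : ℕ):ℝ) := by
      intro j hj
      have h2 : k + 2 - (j+1) = k + 1 - j := by omega
      rw [h2]; ring
    rw [Finset.sum_congr rfl this]
    linarith [h]
  rw [hS2] at hE
  have hS1val : ∑ j ∈ Finset.range (k+1), ((k+2).choose (j+1) : ℝ) * (p ^ j * r ^ (k+1-j))
      = 1 - p^(k+1) := by linarith
  rw [hS1val] at hS1
  have hpp : p * (1 - p^(k+1)) = p - p^(k+2) := by ring
  linarith [hS1, hpp]
end

section
/- In the imbalanced (m,3)-RPS with m ≥ 2 players, every Nash equilibrium assigns, for each of the three objects R, P, S, positive probability to that object for at least one player. (I.e., the game is strongly playable.) -/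
/-- Objects: `0 = R`, `1 = P`, `2 = S`. The winning object for a profile of
choices in the imbalanced `(m,3)`-RPS: any multiset containing at least one `S`
and one `R` is a win for `R`; any multiset of only `R` and `P` is a win for `P`
(an all-`R` multiset is an all-way tie, won by `R`); any multiset of only `P`
and `S` is a win for `S`. -/
def imbWinner {m : ℕ} (c : Fin m → Fin 3) : Fin 3 :=
  if (∃ i, c i = 0) ∧ (∃ i, c i = 2) then 0
  else if (∃ i, c i = 0) ∧ (∃ i, c i = 1) then 1
  else if (∃ i, c i = 0) then 0
  else if (∃ i, c i = 2) then 2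
  else 1

/-- Payoff to player `j`: winners in an `m'`-way tie receive `(m - m')/m'`,
losers receive `-1`. -/
noncomputable def imbPayoff {m : ℕ} (c : Fin m → Fin 3) (j : Fin m) : ℝ :=
  let W : Finset (Fin m) := Finset.univ.filter (fun i => c i = imbWinner c)
  if c j = imbWinner c then ((m : ℝ) - W.card) / W.card else -1

/-- Expected payoff of player `j` when each player `i` uses mixed strategy `σ i`. -/
noncomputable def imbExpPayoff {m : ℕ} (σ : Fin m → Fin 3 → ℝ) (j : Fin m) : ℝ :=
  ∑ c : Fin m → Fin 3, (∏ i, σ i (c i)) * imbPayoff c j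

/-- `σ` is a profile of mixed strategies. -/
def IsMixedProfile {m : ℕ} (σ : Fin m → Fin 3 → ℝ) : Prop :=
  ∀ i, (∀ o, 0 ≤ σ i o) ∧ ∑ o, σ i o = 1

/-- `σ` is a Nash equilibrium: no unilateral deviation increases a player's
expected payoff. -/
noncomputable def IsNashEq {m : ℕ} (σ : Fin m → Fin 3 → ℝ) : Prop :=
  IsMixedProfile σ ∧
    ∀ j (τ : Fin 3 → ℝ), (∀ o, 0 ≤ τ o) → (∑ o, τ o = 1) →
      imbExpPayoff (Function.update σ j τ) j ≤ imbExpPayoff σ j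

lemma payoff_def {m : ℕ} (c : Fin m → Fin 3) (j : Fin m) :
    imbPayoff c j = if c j = imbWinner c then
      ((m : ℝ) - (Finset.univ.filter (fun i => c i = imbWinner c)).card) /
        (Finset.univ.filter (fun i => c i = imbWinner c)).card else -1 := rfl

lemma winner_mem {m : ℕ} (hm : 1 ≤ m) (c : Fin m → Fin 3) : ∃ i, c i = imbWinner c := by
  have h3 : ∀ x : Fin 3, x ≠ 0 → x ≠ 2 → x = 1 := by decide
  unfold imbWinner
  split_ifs with h1 h2 h4 h5
  · exact h1.1
  · exact h2.2
  · exact h4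
  · exact h5
  · exact ⟨⟨0, hm⟩, h3 _ (fun h => h4 ⟨_, h⟩) (fun h => h5 ⟨_, h⟩)⟩

lemma card_pos' {m : ℕ} (hm : 1 ≤ m) (c : Fin m → Fin 3) :
    0 < (Finset.univ.filter (fun i => c i = imbWinner c)).card := by
  obtain ⟨i, hi⟩ := winner_mem hm c
  exact Finset.card_pos.2 ⟨i, by simp [hi]⟩

lemma paySum {m : ℕ} (hm : 1 ≤ m) (c : Fin m → Fin 3) : ∑ j, imbPayoff c j = 0 := by
  classical
  set k := (Finset.univ.filter (fun i => c i = imbWinner c)).card with hk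
  have hkpos : 0 < k := card_pos' hm c
  have hcards : k + (Finset.univ.filter (fun i => ¬ c i = imbWinner c)).card = m := by
    rw [hk, Finset.card_filter_add_card_filter_not]; simp
  have hcR : ((Finset.univ.filter (fun i => ¬ c i = imbWinner c)).card : ℝ) = (m : ℝ) - k := by
    have := congrArg (Nat.cast : ℕ → ℝ) hcards
    push_cast at this
    linarith
  have hsplit := Finset.sum_filter_add_sum_filter_not Finset.univ
    (fun j => c j = imbWinner c) (imbPayoff c)
  rw [← hsplit]
  have h1 : ∑ j ∈ Finset.univ.filter (fun j => c j = imbWinner c), imbPayoff c j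
      = ∑ _j ∈ Finset.univ.filter (fun j => c j = imbWinner c), (((m : ℝ) - k) / k) :=
    Finset.sum_congr rfl (fun j hj => by
      rw [payoff_def, if_pos (Finset.mem_filter.1 hj).2])
  have h2 : ∑ j ∈ Finset.univ.filter (fun j => ¬ c j = imbWinner c), imbPayoff c j
      = ∑ _j ∈ Finset.univ.filter (fun j => ¬ c j = imbWinner c), (-1 : ℝ) :=
    Finset.sum_congr rfl (fun j hj => by
      rw [payoff_def, if_neg (Finset.mem_filter.1 hj).2])
  rw [h1, h2, Finset.sum_const, Finset.sum_const, nsmul_eq_mul, nsmul_eq_mul, ← hk, hcR]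
  have hk0 : (k : ℝ) ≠ 0 := by positivity
  field_simp
  ring

lemma expSum {m : ℕ} (hm : 1 ≤ m) (σ : Fin m → Fin 3 → ℝ) :
    ∑ j, imbExpPayoff σ j = 0 := by
  unfold imbExpPayoff
  rw [Finset.sum_comm]
  refine Finset.sum_eq_zero fun c _ => ?_
  rw [← Finset.mul_sum, paySum hm c, mul_zero]

lemma dev_eq {m : ℕ} (σ : Fin m → Fin 3 → ℝ) (j : Fin m) (τ : Fin 3 → ℝ) :
    imbExpPayoff (Function.update σ j τ) j
    = ∑ c : Fin m → Fin 3, τ (c j) * ((∏ i ∈ ({j}ᶜ : Finset (Fin m)), σ i (c i)) * imbPayoff c j) := by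
  unfold imbExpPayoff
  refine Finset.sum_congr rfl fun c _ => ?_
  rw [Fintype.prod_eq_mul_prod_compl j, Function.update_self, mul_assoc]
  congr 2
  refine Finset.prod_congr rfl fun i hi => ?_
  rw [Function.update_of_ne (by simpa using hi)]

lemma dev_eq' {m : ℕ} (σ : Fin m → Fin 3 → ℝ) (j : Fin m) (a : Fin 3) :
    imbExpPayoff (Function.update σ j (fun x => if x = a then (1:ℝ) else 0)) j
    = ∑ c : Fin m → Fin 3, (if c j = a then (1:ℝ) else 0) *
        ((∏ i ∈ ({j}ᶜ : Finset (Fin m)), σ i (c i)) * imbPayoff c j) :=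
  dev_eq σ j _

lemma pay_nonneg {m : ℕ} (hm : 1 ≤ m) (c : Fin m → Fin 3) (j : Fin m)
    (h : c j = imbWinner c) : 0 ≤ imbPayoff c j := by
  rw [payoff_def, if_pos h]
  have h1 := card_pos' hm c
  have h2 : (Finset.univ.filter (fun i => c i = imbWinner c)).card ≤ m := by
    simpa using Finset.card_filter_le Finset.univ (fun i => c i = imbWinner c)
  apply div_nonneg
  · have : ((Finset.univ.filter (fun i => c i = imbWinner c)).card : ℝ) ≤ m := by exact_mod_cast h2
    linarith
  · positivity

lemma pay_pos {m : ℕ} (hm : 1 ≤ m) (c : Fin m → Fin 3) (j : Fin m)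
    (h : c j = imbWinner c) (i : Fin m) (hi : c i ≠ imbWinner c) : 0 < imbPayoff c j := by
  rw [payoff_def, if_pos h]
  have h1 := card_pos' hm c
  have h2 : (Finset.univ.filter (fun i => c i = imbWinner c)).card < m := by
    have hsub : Finset.univ.filter (fun i => c i = imbWinner c) ⊆ Finset.univ.erase i := by
      intro x hx
      refine Finset.mem_erase.2 ⟨?_, Finset.mem_univ x⟩
      rintro rfl; exact hi (Finset.mem_filter.1 hx).2
    calc (Finset.univ.filter (fun i => c i = imbWinner c)).card
        ≤ (Finset.univ.erase i).card := Finset.card_le_card hsub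
      _ < Finset.univ.card := Finset.card_erase_lt_of_mem (Finset.mem_univ i)
      _ = m := by simp
  apply div_pos
  · have : ((Finset.univ.filter (fun i => c i = imbWinner c)).card : ℝ) < m := by exact_mod_cast h2
    linarith
  · positivity

lemma main_false {m : ℕ} (hm : 2 ≤ m) (σ : Fin m → Fin 3 → ℝ) (hN : IsNashEq σ)
    (o s t : Fin 3)
    (hc : (o = 2 ∧ s = 1 ∧ t = 0) ∨ (o = 0 ∧ s = 2 ∧ t = 1) ∨ (o = 1 ∧ s = 0 ∧ t = 2))
    (h0 : ∀ i, σ i o = 0) : False := by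
  classical
  obtain ⟨hmix, hnash⟩ := hN
  have hm1 : 1 ≤ m := by omega
  have hos : s ≠ o := by
    rcases hc with ⟨h, h', _⟩ | ⟨h, h', _⟩ | ⟨h, h', _⟩ <;> subst h <;> subst h' <;> decide
  have hto : t ≠ o := by
    rcases hc with ⟨h, _, h'⟩ | ⟨h, _, h'⟩ | ⟨h, _, h'⟩ <;> subst h <;> subst h' <;> decide
  have hts : t ≠ s := by
    rcases hc with ⟨_, h, h'⟩ | ⟨_, h, h'⟩ | ⟨_, h, h'⟩ <;> subst h <;> subst h' <;> decide
  have htricho : ∀ x : Fin 3, x = o ∨ x = s ∨ x = t := by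
    rcases hc with ⟨h, h', h''⟩ | ⟨h, h', h''⟩ | ⟨h, h', h''⟩ <;>
      subst h <;> subst h' <;> subst h'' <;> decide
  -- sum of each player's strategy over the three objects
  have hsum3 : ∀ i, σ i o + σ i s + σ i t = 1 := by
    intro i
    have := (hmix i).2
    rw [Fin.sum_univ_three] at this
    rcases hc with ⟨h, h', h''⟩ | ⟨h, h', h''⟩ | ⟨h, h', h''⟩ <;>
      subst h <;> subst h' <;> subst h'' <;> linarith
  -- pure strategies
  have hpure_nonneg : ∀ a : Fin 3, ∀ x : Fin 3, (0:ℝ) ≤ if x = a then 1 else 0 := by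
    intro a x; split <;> norm_num
  have hpure_sum : ∀ a : Fin 3, ∑ x : Fin 3, (if x = a then (1:ℝ) else 0) = 1 := by
    intro a; simp
  -- winner fact A
  have hA : ∀ c : Fin m → Fin 3, (∀ i, c i ≠ o) → (∃ i, c i = s) → imbWinner c = s := by
    rcases hc with ⟨h, h', _⟩ | ⟨h, h', _⟩ | ⟨h, h', _⟩ <;> subst h <;> subst h' <;>
      · intro c h1 h2
        unfold imbWinner
        split_ifs <;> first | rfl | tauto
  -- nonnegativity of each deviation-to-s term
  have hterm_nonneg : ∀ (j : Fin m) (c : Fin m → Fin 3),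
      0 ≤ (if c j = s then (1:ℝ) else 0) *
        ((∏ i ∈ ({j}ᶜ : Finset (Fin m)), σ i (c i)) * imbPayoff c j) := by
    intro j c
    by_cases hjs : c j = s
    · by_cases ho' : ∃ i, c i = o
      · obtain ⟨i, hi⟩ := ho'
        have hij : i ≠ j := by rintro rfl; rw [hjs] at hi; exact hos hi
        have hz : ∏ i ∈ ({j}ᶜ : Finset (Fin m)), σ i (c i) = 0 :=
          Finset.prod_eq_zero (by simpa using hij) (by rw [hi]; exact h0 i)
        rw [hz, zero_mul, mul_zero]
      · push_neg at ho'
        have hw := hA c ho' ⟨j, hjs⟩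
        have hp : 0 ≤ imbPayoff c j := pay_nonneg hm1 c j (hjs.trans hw.symm)
        have hpr : 0 ≤ ∏ i ∈ ({j}ᶜ : Finset (Fin m)), σ i (c i) :=
          Finset.prod_nonneg fun i _ => (hmix i).1 _
        rw [if_pos hjs, one_mul]
        exact mul_nonneg hpr hp
    · rw [if_neg hjs, zero_mul]
  -- every player's equilibrium payoff is zero
  have hExp0 : ∀ j, imbExpPayoff σ j = 0 := by
    have hge : ∀ j ∈ Finset.univ, (0:ℝ) ≤ imbExpPayoff σ j := by
      intro j _
      refine le_trans ?_ (hnash j (fun x => if x = s then 1 else 0) (hpure_nonneg s) (hpure_sum s))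
      rw [dev_eq']
      exact Finset.sum_nonneg fun c _ => hterm_nonneg j c
    intro j
    exact (Finset.sum_eq_zero_iff_of_nonneg hge).1 (expSum hm1 σ) j (Finset.mem_univ j)
  -- fix player j0
  set j0 : Fin m := ⟨0, by omega⟩ with hj0
  -- each term of j0's deviation-to-s payoff is zero
  have hterm0 : ∀ c : Fin m → Fin 3,
      (if c j0 = s then (1:ℝ) else 0) *
        ((∏ i ∈ ({j0}ᶜ : Finset (Fin m)), σ i (c i)) * imbPayoff c j0) = 0 := by
    have hle : ∑ c : Fin m → Fin 3, (if c j0 = s then (1:ℝ) else 0) *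
        ((∏ i ∈ ({j0}ᶜ : Finset (Fin m)), σ i (c i)) * imbPayoff c j0) ≤ 0 := by
      have h := hnash j0 (fun x => if x = s then 1 else 0) (hpure_nonneg s) (hpure_sum s)
      rw [hExp0 j0, dev_eq'] at h
      exact h
    have hz : ∑ c : Fin m → Fin 3, (if c j0 = s then (1:ℝ) else 0) *
        ((∏ i ∈ ({j0}ᶜ : Finset (Fin m)), σ i (c i)) * imbPayoff c j0) = 0 :=
      le_antisymm hle (Finset.sum_nonneg fun c _ => hterm_nonneg j0 c)
    intro c
    exact (Finset.sum_eq_zero_iff_of_nonneg (fun c _ => hterm_nonneg j0 c)).1 hz c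
      (Finset.mem_univ c)
  -- all other players never play t
  have hst : ∀ i, i ≠ j0 → σ i t = 0 := by
    intro i hij
    by_contra hne
    have hpt : 0 < σ i t := lt_of_le_of_ne ((hmix i).1 t) (Ne.symm hne)
    set c : Fin m → Fin 3 := fun i' =>
      if i' = j0 then s else if i' = i then t else (if 0 < σ i' s then s else t) with hcdef
    have hcj : c j0 = s := by simp [hcdef]
    have hci : c i = t := by simp [hcdef, hij]
    have hno : ∀ i', c i' ≠ o := by
      intro i'
      simp only [hcdef]
      split_ifs <;> first | exact hos | exact hto
    have hpos : ∀ i', i' ≠ j0 → i' ≠ i → 0 < σ i' (c i') := by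
      intro i' h1 h2
      simp only [hcdef, if_neg h1, if_neg h2]
      split_ifs with h3
      · exact h3
      · push_neg at h3
        have h4 : σ i' s = 0 := le_antisymm h3 ((hmix i').1 s)
        have := hsum3 i'
        have h5 : σ i' t = 1 := by rw [h0 i'] at this; linarith
        rw [h5]; norm_num
    have hw := hA c hno ⟨j0, hcj⟩
    have hpp : 0 < imbPayoff c j0 :=
      pay_pos hm1 c j0 (hcj.trans hw.symm) i (by rw [hci, hw]; exact hts)
    have h := hterm0 c
    rw [if_pos hcj, one_mul, mul_eq_zero] at h
    rcases h with h | h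
    · obtain ⟨i', hi'mem, hi'z⟩ := Finset.prod_eq_zero_iff.1 h
      have hi'j : i' ≠ j0 := by simpa using hi'mem
      by_cases hii : i' = i
      · subst hii; rw [hci] at hi'z; exact hne hi'z
      · exact absurd hi'z (ne_of_gt (hpos i' hi'j hii))
    · exact absurd h (ne_of_gt hpp)
  -- all other players play s with certainty apart from s
  have hs1 : ∀ i, i ≠ j0 → σ i s = 1 := by
    intro i hij
    have := hsum3 i
    rw [h0 i, hst i hij] at this
    linarith
  -- the deviation of j0 to o
  set c0 : Fin m → Fin 3 := fun i' => if i' = j0 then o else s with hc0def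
  have hc0j : c0 j0 = o := by simp [hc0def]
  have hc0i : ∀ i, i ≠ j0 → c0 i = s := fun i hi => by simp [hc0def, hi]
  obtain ⟨i1, hi1⟩ : ∃ i : Fin m, i ≠ j0 := ⟨⟨1, by omega⟩, by
    simp [hj0, Fin.ext_iff]⟩
  have hEo : ∃ i, c0 i = o := ⟨j0, hc0j⟩
  have hEs : ∃ i, c0 i = s := ⟨i1, hc0i i1 hi1⟩
  have hNt : ∀ i, c0 i ≠ t := by
    intro i
    by_cases hij : i = j0
    · rw [hij, hc0j]; exact fun h => hto h.symm
    · rw [hc0i i hij]; exact fun h => hts h.symm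
  have hwin0 : imbWinner c0 = o := by
    rcases hc with ⟨h, h', h''⟩ | ⟨h, h', h''⟩ | ⟨h, h', h''⟩ <;>
        subst h <;> subst h' <;> subst h''
    · have h1 : ¬ ∃ i, c0 i = 0 := by rintro ⟨i, hi⟩; exact hNt i hi
      simp [imbWinner, h1, hEo]
    · simp [imbWinner, hEo, hEs]
    · have h1 : ¬ ∃ i, c0 i = 2 := by rintro ⟨i, hi⟩; exact hNt i hi
      simp [imbWinner, h1, hEo, hEs]
  have hfilt : Finset.univ.filter (fun i => c0 i = imbWinner c0) = {j0} := by
    rw [hwin0]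
    ext i
    simp only [Finset.mem_filter, Finset.mem_univ, true_and, Finset.mem_singleton]
    constructor
    · intro h
      by_contra hij
      rw [hc0i i hij] at h
      exact hos h
    · rintro rfl; exact hc0j
  have hpayc0 : imbPayoff c0 j0 = (m : ℝ) - 1 := by
    rw [payoff_def, if_pos (hc0j.trans hwin0.symm), hfilt]
    simp
  have hdevo : imbExpPayoff (Function.update σ j0 (fun x => if x = o then 1 else 0)) j0
      = (m : ℝ) - 1 := by
    rw [dev_eq']
    rw [Finset.sum_eq_single c0]
    · rw [if_pos hc0j, one_mul]
      have hpr : ∏ i ∈ ({j0}ᶜ : Finset (Fin m)), σ i (c0 i) = 1 :=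
        Finset.prod_eq_one fun i hi => by
          have hij : i ≠ j0 := by simpa using hi
          rw [hc0i i hij]; exact hs1 i hij
      rw [hpr, one_mul, hpayc0]
    · intro c _ hcne
      by_cases h1 : c j0 = o
      · rw [if_pos h1, one_mul]
        have : ∃ i, i ≠ j0 ∧ c i ≠ s := by
          by_contra hall
          push_neg at hall
          apply hcne
          funext i'
          by_cases hi' : i' = j0
          · rw [hi', h1, hc0j]
          · rw [hall i' hi', hc0i i' hi']
        obtain ⟨i, hij, his⟩ := this
        have hz : σ i (c i) = 0 := by
          rcases htricho (c i) with h | h | h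
          · rw [h]; exact h0 i
          · exact absurd h his
          · rw [h]; exact hst i hij
        have hpz : (∏ i ∈ ({j0}ᶜ : Finset (Fin m)), σ i (c i)) = 0 :=
          Finset.prod_eq_zero (i := i) (by simpa using hij) hz
        rw [hpz, zero_mul]
      · rw [if_neg h1, zero_mul]
    · intro h; exact absurd (Finset.mem_univ c0) h
  have hlast := hnash j0 (fun x => if x = o then 1 else 0) (hpure_nonneg o) (hpure_sum o)
  rw [hdevo, hExp0 j0] at hlast
  have : (2:ℝ) ≤ (m:ℝ) := by exact_mod_cast hm
  linarith

/-- The imbalanced `(m,3)`-RPS is strongly playable: every Nash equilibrium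
gives every object positive probability for some player. -/
theorem stmt_5 (m : ℕ) (hm : 2 ≤ m) (σ : Fin m → Fin 3 → ℝ)
    (hN : IsNashEq σ) : ∀ o : Fin 3, ∃ i : Fin m, 0 < σ i o := by
  by_contra h
  push_neg at h
  obtain ⟨o, ho⟩ := h
  have h0 : ∀ i, σ i o = 0 := fun i => le_antisymm (ho i) ((hN.1 i).1 o)
  fin_cases o
  · exact main_false hm σ hN 0 2 1 (Or.inr (Or.inl ⟨rfl, rfl, rfl⟩)) h0
  · exact main_false hm σ hN 1 0 2 (Or.inr (Or.inr ⟨rfl, rfl, rfl⟩)) h0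
  · exact main_false hm σ hN 2 1 0 (Or.inl ⟨rfl, rfl, rfl⟩) h0
end

section
/- Fix integers k ≥ 2, t ≥ 0 and real s ∈ [0,1]. For any integer l with 0 ≤ l ≤ k−2, when s = 0 the expression ∑_{b=1}^{l+1} (s(−1)^b(1+k+t)/(1+b) − (1−s)/C(k+t, b)) · C(l, b−1) equals −(k+1+t)/((k+t−l)(k+1+t−l)), and when s = 1 it equals −(1+k+t)/((1+l)(2+l)). -/
lemma sumP (n : ℕ) : ∀ l m a : ℕ, l + m + a = n →
    ∑ j ∈ Finset.range (l+1), ((l.choose j : ℝ) / (n.choose (j+m))) =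
      (n+1) * m.factorial * a.factorial / (m+a+1).factorial := by
  intro l
  induction l with
  | zero =>
    intro m a h
    simp only [Finset.range_one, Finset.sum_singleton, Nat.choose_zero_right, Nat.cast_one,
      Nat.zero_add]
    rw [Nat.cast_choose ℝ (by omega : m ≤ n)]
    have h1 : n - m = a := by omega
    have h2 : m + a + 1 = n + 1 := by omega
    rw [h1, h2, Nat.factorial_succ]
    have c1 : (0:ℝ) < n.factorial := by exact_mod_cast n.factorial_pos
    have c2 : (0:ℝ) < m.factorial := by exact_mod_cast m.factorial_pos
    have c3 : (0:ℝ) < a.factorial := by exact_mod_cast a.factorial_pos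
    have c5 : ((n:ℝ)+1) ≠ 0 := by positivity
    push_cast
    rw [one_div_div]
    field_simp
  | succ l ih =>
    intro m a h
    have key : ∑ j ∈ Finset.range (l+2), ((l+1).choose j : ℝ)/(n.choose (j+m))
        = (∑ j ∈ Finset.range (l+1), (l.choose j : ℝ)/(n.choose (j+(m+1))))
        + (∑ j ∈ Finset.range (l+1), (l.choose j : ℝ)/(n.choose (j+m))) := by
      rw [Finset.sum_range_succ' (fun j => ((l+1).choose j : ℝ)/(n.choose (j+m))) (l+1)]
      have e1 : ∀ j ∈ Finset.range (l+1), ((l+1).choose (j+1) : ℝ)/(n.choose (j+1+m))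
          = (l.choose j : ℝ)/(n.choose (j+(m+1))) + (l.choose (j+1) : ℝ)/(n.choose (j+1+m)) := by
        intro j _
        rw [Nat.choose_succ_succ]
        push_cast
        rw [show j+1+m = j+(m+1) by ring, add_div]
      rw [Finset.sum_congr rfl e1, Finset.sum_add_distrib]
      have e2 : (∑ j ∈ Finset.range (l+1), (l.choose (j+1) : ℝ)/(n.choose (j+1+m)))
          + ((l+1).choose 0 : ℝ)/(n.choose (0+m))
          = ∑ j ∈ Finset.range (l+2), (l.choose j : ℝ)/(n.choose (j+m)) := by
        rw [Finset.sum_range_succ' (fun j => (l.choose j : ℝ)/(n.choose (j+m))) (l+1)]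
        simp
      have e3 : ∑ j ∈ Finset.range (l+2), (l.choose j : ℝ)/(n.choose (j+m))
          = ∑ j ∈ Finset.range (l+1), (l.choose j : ℝ)/(n.choose (j+m)) := by
        rw [Finset.sum_range_succ, Nat.choose_succ_self]
        simp
      rw [add_assoc, e2, e3]
    rw [key, ih (m+1) a (by omega), ih m (a+1) (by omega)]
    have h2 : m + 1 + a + 1 = (m + a + 1) + 1 := by omega
    have h3 : m + (a + 1) + 1 = (m + a + 1) + 1 := by omega
    rw [h2, h3]
    have f1 : (((m+a+1)+1).factorial : ℝ) = ((m:ℝ)+a+2) * (m+a+1).factorial := by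
      rw [Nat.factorial_succ]; push_cast; ring
    have f2 : (((m+1)).factorial : ℝ) = ((m:ℝ)+1) * m.factorial := by
      rw [Nat.factorial_succ]; push_cast; ring
    have f3 : (((a+1)).factorial : ℝ) = ((a:ℝ)+1) * a.factorial := by
      rw [Nat.factorial_succ]; push_cast; ring
    rw [f1, f2, f3]
    have c1 : (0:ℝ) < (m+a+1).factorial := by exact_mod_cast (m+a+1).factorial_pos
    have c4 : ((m:ℝ)+a+2) ≠ 0 := by positivity
    field_simp
    ring

lemma sumF : ∀ l m : ℕ,
    ∑ j ∈ Finset.range (l+1), ((-1:ℝ)^j * l.choose j / (j+m+1)) =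
      m.factorial * l.factorial / (l+m+1).factorial := by
  intro l
  induction l with
  | zero =>
    intro m
    simp [Nat.factorial_succ]
    have : (0:ℝ) < m.factorial := by exact_mod_cast m.factorial_pos
    field_simp
  | succ l ih =>
    intro m
    have key : ∑ j ∈ Finset.range (l+2), ((-1:ℝ)^j * (l+1).choose j / ((j:ℝ)+m+1))
        = (∑ j ∈ Finset.range (l+1), ((-1:ℝ)^j * l.choose j / ((j:ℝ)+m+1)))
        - (∑ j ∈ Finset.range (l+1), ((-1:ℝ)^j * l.choose j / ((j:ℝ)+(m+1)+1))) := by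
      rw [Finset.sum_range_succ' (fun j => ((-1:ℝ)^j * (l+1).choose j / ((j:ℝ)+m+1))) (l+1)]
      have e1 : ∀ j ∈ Finset.range (l+1), ((-1:ℝ)^(j+1) * (l+1).choose (j+1) / (((j+1:ℕ):ℝ)+m+1))
          = (-1:ℝ)^(j+1) * l.choose (j+1) / (((j+1:ℕ):ℝ)+m+1)
            - (-1:ℝ)^j * l.choose j / ((j:ℝ)+(m+1)+1) := by
        intro j _
        rw [Nat.choose_succ_succ]
        push_cast
        ring
      rw [Finset.sum_congr rfl e1, Finset.sum_sub_distrib]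
      have e2 : (∑ j ∈ Finset.range (l+1), (-1:ℝ)^(j+1) * (l.choose (j+1) : ℝ)/(((j+1:ℕ):ℝ)+m+1))
          + (-1:ℝ)^0 * ((l+1).choose 0 : ℝ)/(((0:ℕ):ℝ)+m+1)
          = ∑ j ∈ Finset.range (l+2), (-1:ℝ)^j * (l.choose j : ℝ)/((j:ℝ)+m+1) := by
        rw [Finset.sum_range_succ' (fun j => (-1:ℝ)^j * (l.choose j : ℝ)/((j:ℝ)+m+1)) (l+1)]
        simp
      have e3 : ∑ j ∈ Finset.range (l+2), (-1:ℝ)^j * (l.choose j : ℝ)/((j:ℝ)+m+1)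
          = ∑ j ∈ Finset.range (l+1), (-1:ℝ)^j * (l.choose j : ℝ)/((j:ℝ)+m+1) := by
        rw [Finset.sum_range_succ, Nat.choose_succ_self]
        simp
      rw [sub_add_eq_add_sub, e2, e3]
    rw [key, ih m]
    have ih2 := ih (m+1)
    push_cast at ih2
    rw [ih2]
    have h2 : l + (m+1) + 1 = (l + m + 1) + 1 := by omega
    have h3 : (l+1) + m + 1 = (l + m + 1) + 1 := by omega
    rw [h2] at ih2
    have f1 : (((l+m+1)+1).factorial : ℝ) = ((l:ℝ)+m+2) * (l+m+1).factorial := by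
      rw [Nat.factorial_succ]; push_cast; ring
    have f2 : (((m+1)).factorial : ℝ) = ((m:ℝ)+1) * m.factorial := by
      rw [Nat.factorial_succ]; push_cast; ring
    have f3 : (((l+1)).factorial : ℝ) = ((l:ℝ)+1) * l.factorial := by
      rw [Nat.factorial_succ]; push_cast; ring
    rw [h3, f1, f2, f3]
    rw [show l + (m+1) + 1 = (l+m+1)+1 from by omega, f1] at *
    have c1 : (0:ℝ) < (l+m+1).factorial := by exact_mod_cast (l+m+1).factorial_pos
    have c4 : ((l:ℝ)+m+2) ≠ 0 := by positivity
    field_simp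
    ring

theorem stmt_8 (k t l : ℕ) (hk : 2 ≤ k) (hl : l ≤ k - 2) :
    (∑ b ∈ Finset.Icc 1 (l + 1),
        ((0 : ℝ) * (-1) ^ b * (1 + k + t) / (1 + b) - (1 - 0) / ((k + t).choose b)) *
          (l.choose (b - 1)) =
      -((k : ℝ) + 1 + t) / (((k : ℝ) + t - l) * ((k : ℝ) + 1 + t - l))) ∧
    (∑ b ∈ Finset.Icc 1 (l + 1),
        ((1 : ℝ) * (-1) ^ b * (1 + k + t) / (1 + b) - (1 - 1) / ((k + t).choose b)) *
          (l.choose (b - 1)) =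
      -(1 + (k : ℝ) + t) / ((1 + l) * (2 + l))) := by
  set n := k + t with hn
  constructor
  · rw [show Finset.Icc 1 (l+1) = Finset.Ico 1 (l+2) by rfl, Finset.sum_Ico_eq_sum_range]
    have e : ∀ j ∈ Finset.range (l+2-1),
        ((0 : ℝ) * (-1) ^ (1+j) * (1 + k + t) / (1 + ((1+j:ℕ):ℝ)) - (1 - 0) / ((n).choose (1+j))) *
          (l.choose (1+j - 1))
        = -((l.choose j : ℝ) / (n.choose (j+1))) := by
      intro j _
      simp only [zero_mul, zero_div, zero_sub, Nat.add_sub_cancel_left]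
      rw [show 1 + j = j + 1 by ring]
      ring
    rw [Finset.sum_congr rfl e, Finset.sum_neg_distrib]
    rw [show l+2-1 = l+1 by omega, sumP n l 1 (n-l-1) (by omega)]
    have ha : ((n - l - 1 : ℕ) : ℝ) = (k:ℝ) + t - l - 1 := by
      have h0 : (n - l - 1) + (l + 1) = k + t := by omega
      have h7 : ((n - l - 1 : ℕ) : ℝ) + ((l:ℝ) + 1) = (k:ℝ) + t := by exact_mod_cast h0
      linarith
    have hnc : ((n:ℕ):ℝ) = (k:ℝ) + t := by rw [hn]; push_cast; ring
    rw [show 1 + (n-l-1) + 1 = (n-l-1) + 1 + 1 by omega]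
    simp only [Nat.factorial_succ, Nat.factorial_zero, Nat.factorial_one]
    push_cast [ha, hnc]
    have hfp : (0:ℝ) < ((n - l - 1).factorial : ℝ) := by exact_mod_cast (n-l-1).factorial_pos
    have h1 : (k:ℝ) + t - l > 1 := by
      have h5 : l + 2 ≤ k := by omega
      have h6 : ((l:ℝ)) + 2 ≤ k := by exact_mod_cast h5
      have ht : (0:ℝ) ≤ t := by positivity
      linarith
    have h2 : (k:ℝ) + t - l ≠ 0 := by linarith
    have h3 : (k:ℝ) + 1 + t - l ≠ 0 := by intro h4; linarith [h4]
    rw [show (k:ℝ) + t - l - 1 + 1 + 1 = k + 1 + t - l by ring, show (k:ℝ) + t - l - 1 + 1 = k + t - l by ring]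
    field_simp
    ring
  · rw [show Finset.Icc 1 (l+1) = Finset.Ico 1 (l+2) by rfl, Finset.sum_Ico_eq_sum_range]
    have e : ∀ j ∈ Finset.range (l+2-1),
        ((1 : ℝ) * (-1) ^ (1+j) * (1 + k + t) / (1 + ((1+j:ℕ):ℝ)) - (1 - 1) / ((n).choose (1+j))) *
          (l.choose (1+j - 1))
        = (-(1 + (k:ℝ) + t)) * ((-1:ℝ)^j * l.choose j / ((j:ℝ)+1+1)) := by
      intro j _
      simp only [Nat.add_sub_cancel_left, sub_zero, one_mul]
      rw [show 1 + j = j + 1 by ring, pow_succ]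
      push_cast
      ring
    rw [Finset.sum_congr rfl e, ← Finset.mul_sum]
    have hF := sumF l 1
    push_cast at hF
    rw [show l+2-1 = l+1 by omega, hF]
    simp only [Nat.factorial_succ, Nat.factorial_one]
    have hlf : (0:ℝ) < l.factorial := by exact_mod_cast l.factorial_pos
    push_cast
    have h1 : (1:ℝ) + l ≠ 0 := by positivity
    have h2 : (2:ℝ) + l ≠ 0 := by positivity
    field_simp
    ring
end

section
/- For k = 2 and every t with 0 ≤ t ≤ 50, there exist no real numbers r, s ∈ (0,1) satisfying simultaneously: E_i(R) = E_i(P), E_i(R) ≥ E_i(S), E_s(S) = E_s(P), and (if t > 0) E_p(P) ≥ E_p(R) and E_p(P) ≥ E_p(S), where E_i(R) = s(1+k+t)(1−(1−r)^k)/(kr) − (1−s), E_i(P) = (1−s)∑_{b=0}^{k-1} C(k−1,b) r^b / C(k+t,b) − s, E_i(S) = −1 + (2−s)((k+1+t)/2)(1−r)^{k−1}, E_s(P) = ∑_{b=0}^{k} C(k,b) r^b / C(k+t,b), E_s(S) = −1 + (k+1+t)(1−r)^k, E_p(R) = s(1+k+t)(1−(1−r)^{k+1})/((k+1)r) − (1−s),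 E_p(P) = (1−s)∑_{b=0}^{k} C(k,b) r^b / C(k+t,b) − s, E_p(S) = −1 + (2−s)((k+1+t)/2)(1−r)^k. -/
/-- Expected payoff of a mixing (`r`-)player choosing Rock. -/
noncomputable def EiR (k t : ℕ) (r s : ℝ) : ℝ :=
  s * (1 + k + t) * ((1 - (1 - r) ^ k) / (k * r)) - (1 - s)

/-- Expected payoff of a mixing (`r`-)player choosing Paper. -/
noncomputable def EiP (k t : ℕ) (r s : ℝ) : ℝ :=
  (1 - s) * (∑ b ∈ Finset.range k, ((k - 1).choose b : ℝ) * r ^ b / ((k + t).choose b)) - s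

/-- Expected payoff of a mixing (`r`-)player choosing Scissors. -/
noncomputable def EiS (k t : ℕ) (r s : ℝ) : ℝ :=
  -1 + (2 - s) * (((k : ℝ) + 1 + t) / 2) * (1 - r) ^ (k - 1)

/-- Expected payoff of the `s`-player choosing Paper. -/
noncomputable def EsP (k t : ℕ) (r : ℝ) : ℝ :=
  ∑ b ∈ Finset.range (k + 1), (k.choose b : ℝ) * r ^ b / ((k + t).choose b)

/-- Expected payoff of the `s`-player choosing Scissors. -/
noncomputable def EsS (k t : ℕ) (r : ℝ) : ℝ :=
  -1 + ((k : ℝ) + 1 + t) * (1 - r) ^ k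

/-- Expected payoff of a pure-Paper player choosing Rock. -/
noncomputable def EpR (k t : ℕ) (r s : ℝ) : ℝ :=
  s * (1 + k + t) * ((1 - (1 - r) ^ (k + 1)) / ((k + 1) * r)) - (1 - s)

/-- Expected payoff of a pure-Paper player choosing Paper. -/
noncomputable def EpP (k t : ℕ) (r s : ℝ) : ℝ :=
  (1 - s) * (∑ b ∈ Finset.range (k + 1), (k.choose b : ℝ) * r ^ b / ((k + t).choose b)) - s

/-- Expected payoff of a pure-Paper player choosing Scissors. -/
noncomputable def EpS (k t : ℕ) (r s : ℝ) : ℝ :=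
  -1 + (2 - s) * (((k : ℝ) + 1 + t) / 2) * (1 - r) ^ k

/-!
Paper earns the `s`-player at least `1`, so its indifference `EsS = EsP` forces
`(t + 3)(1 - r)² ≥ 2`. With that much weight on `(1 - r)²`, a mixing player strictly prefers
Scissors to Paper, contradicting `EiS ≤ EiR = EiP`.
-/

lemma one_le_EsP (k t : ℕ) {r : ℝ} (hr : 0 ≤ r) : 1 ≤ EsP k t r := by
  rw [EsP, Finset.sum_range_succ']
  simp only [Nat.choose_zero_right, Nat.cast_one, pow_zero, mul_one, div_one]
  exact le_add_of_nonneg_left (Finset.sum_nonneg fun b _ => by positivity)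

lemma two_le_of_EsS_eq_EsP {k t : ℕ} {r : ℝ} (hr : 0 ≤ r) (h : EsS k t r = EsP k t r) :
    2 ≤ ((k : ℝ) + 1 + t) * (1 - r) ^ k := by
  have := one_le_EsP k t hr
  rw [← h, EsS] at this
  linarith

lemma EiP_two (t : ℕ) (r s : ℝ) : EiP 2 t r s = (1 - s) * (1 + r / (2 + t)) - s := by
  simp [EiP, Finset.sum_range_succ]

lemma EiS_two (t : ℕ) (r s : ℝ) : EiS 2 t r s = -1 + (2 - s) * ((3 + t) / 2) * (1 - r) := by
  norm_num [EiS]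

lemma EiP_two_lt_EiS_two {t : ℕ} {r s : ℝ} (hr0 : 0 < r) (hr1 : r < 1) (hs0 : 0 < s)
    (hs1 : s < 1) (hr : 2 ≤ ((t : ℝ) + 3) * (1 - r) ^ 2) : EiP 2 t r s < EiS 2 t r s := by
  rw [EiP_two, EiS_two]
  have hfrac : r / (2 + t) ≤ r / 2 := div_le_div_of_nonneg_left hr0.le two_pos (by linarith)
  have hscaled : ((1 - s) * (1 + r / 2) - s) * (1 - r) <
      (-1 + (2 - s) * ((3 + t) / 2) * (1 - r)) * (1 - r) := by
    nlinarith [mul_le_mul_of_nonneg_left hr (by linarith : (0 : ℝ) ≤ 2 - s),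
      mul_pos hr0 (by linarith : (0 : ℝ) < 1 - s)]
  calc (1 - s) * (1 + r / (2 + t)) - s ≤ (1 - s) * (1 + r / 2) - s := by
        gcongr
    _ < -1 + (2 - s) * ((3 + t) / 2) * (1 - r) := lt_of_mul_lt_mul_right hscaled (by linarith)

theorem stmt_14_general (t : ℕ) :
    ¬ ∃ r s : ℝ, r ∈ Set.Ioo (0:ℝ) 1 ∧ s ∈ Set.Ioo (0:ℝ) 1 ∧
      EiR 2 t r s = EiP 2 t r s ∧
      EiR 2 t r s ≥ EiS 2 t r s ∧
      EsS 2 t r = EsP 2 t r ∧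
      (0 < t → EpP 2 t r s ≥ EpR 2 t r s ∧ EpP 2 t r s ≥ EpS 2 t r s) := by
  rintro ⟨r, s, ⟨hr0, hr1⟩, ⟨hs0, hs1⟩, hRP, hRS, hs, -⟩
  have hweight := two_le_of_EsS_eq_EsP hr0.le hs
  push_cast at hweight
  have := EiP_two_lt_EiS_two hr0 hr1 hs0 hs1 (by linarith)
  linarith

/-- For `k = 2` and `t ≤ 50` the Nash-equilibrium constraint system has no
solution with `r, s ∈ (0,1)`. -/
theorem stmt_14 (t : ℕ) (ht : t ≤ 50) :
    ¬ ∃ r s : ℝ, r ∈ Set.Ioo (0:ℝ) 1 ∧ s ∈ Set.Ioo (0:ℝ) 1 ∧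
      EiR 2 t r s = EiP 2 t r s ∧
      EiR 2 t r s ≥ EiS 2 t r s ∧
      EsS 2 t r = EsP 2 t r ∧
      (0 < t → EpP 2 t r s ≥ EpR 2 t r s ∧ EpP 2 t r s ≥ EpS 2 t r s) :=
  stmt_14_general t
end

section
/- In any Nash equilibrium of the imbalanced (m,3)-RPS in which at most one player assigns positive probability to S, that player (call them q_s) assigns zero probability to R; moreover if q_s plays the pure strategy S, then the profile is not a Nash equilibrium. -/
/-!
Expected payoff is linear in a player's own mixed strategy, so a Nash equilibrium gives no
weight to a pure action that is strictly worse than another one against every opponent profile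
in the support. If nobody but `qs` plays `S`, then for `qs` the action `R` is strictly worse than
`P`: against an opposing `P` it loses while `P` wins, and against all `R` it ties for payoff `0`
while `P` wins alone with payoff `m - 1`. If `qs` plays pure `S`, then for every other player `P`
loses while `R` wins, so all of them play pure `R`; but against all `R` the action `S` loses
while `P` wins alone, so `qs` should not play `S`.
-/

theorem funSplitAt_symm_eq_update {ι α : Type*} [DecidableEq ι] (j : ι) (a b : α)
    (d : {i // i ≠ j} → α) :
    (Equiv.funSplitAt j α).symm (a, d) =
      Function.update ((Equiv.funSplitAt j α).symm (b, d)) j a := by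
  ext i
  by_cases hi : i = j
  · subst hi; simp
  · simp [hi]

section MixedStrategies

variable {ι α : Type*} [Fintype ι] [DecidableEq ι] [Fintype α]

noncomputable def expectedPayoff (σ : ι → α → ℝ) (u : (ι → α) → ℝ) : ℝ :=
  ∑ c, (∏ i, σ i (c i)) * u c

noncomputable def expectedPayoffOfPure (σ : ι → α → ℝ) (u : (ι → α) → ℝ) (j : ι) (a : α) : ℝ :=
  ∑ d : {i // i ≠ j} → α,
    (∏ i : {i // i ≠ j}, σ i (d i)) * u ((Equiv.funSplitAt j α).symm (a, d))

theorem expectedPayoff_update (σ : ι → α → ℝ) (u : (ι → α) → ℝ) (j : ι) (τ : α → ℝ) :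
    expectedPayoff (Function.update σ j τ) u = ∑ a, τ a * expectedPayoffOfPure σ u j a := by
  rw [expectedPayoff, ← (Equiv.funSplitAt j α).symm.sum_comp, Fintype.sum_prod_type]
  refine Finset.sum_congr rfl fun a _ => ?_
  rw [expectedPayoffOfPure, Finset.mul_sum]
  refine Finset.sum_congr rfl fun d _ => ?_
  rw [Fintype.prod_eq_mul_prod_subtype_ne _ j]
  have hothers : ∀ i : {i // i ≠ j},
      Function.update σ j τ i ((Equiv.funSplitAt j α).symm (a, d) i) = σ i (d i) := fun i => by
    simp [i.2]
  rw [Finset.prod_congr rfl fun i _ => hothers i]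
  simp only [Function.update_self, Equiv.funSplitAt_symm_apply, dite_true]
  ring

theorem expectedPayoff_eq_sum (σ : ι → α → ℝ) (u : (ι → α) → ℝ) (j : ι) :
    expectedPayoff σ u = ∑ a, σ j a * expectedPayoffOfPure σ u j a := by
  simpa using expectedPayoff_update σ u j (σ j)

theorem expectedPayoff_update_single [DecidableEq α] (σ : ι → α → ℝ) (u : (ι → α) → ℝ) (j : ι)
    (a : α) :
    expectedPayoff (Function.update σ j (Pi.single a 1)) u = expectedPayoffOfPure σ u j a := by
  simp [expectedPayoff_update, Pi.single_apply]

theorem eq_zero_of_expectedPayoffOfPure_lt {σ : ι → α → ℝ} {u : (ι → α) → ℝ} {j : ι}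
    (hσ : ∀ a, 0 ≤ σ j a) (hsum : ∑ a, σ j a = 1)
    (hbest : ∀ a, expectedPayoffOfPure σ u j a ≤ expectedPayoff σ u) {a b : α}
    (hab : expectedPayoffOfPure σ u j b < expectedPayoffOfPure σ u j a) : σ j b = 0 := by
  by_contra hb
  have hb_pos : 0 < σ j b := (hσ b).lt_of_ne' hb
  have : expectedPayoff σ u < expectedPayoff σ u := calc
    expectedPayoff σ u = ∑ x, σ j x * expectedPayoffOfPure σ u j x := expectedPayoff_eq_sum σ u j
    _ < ∑ x, σ j x * expectedPayoff σ u := by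
      refine Finset.sum_lt_sum (fun x _ => mul_le_mul_of_nonneg_left (hbest x) (hσ x))
        ⟨b, Finset.mem_univ b, mul_lt_mul_of_pos_left (hab.trans_le (hbest a)) hb_pos⟩
    _ = expectedPayoff σ u := by rw [← Finset.sum_mul, hsum, one_mul]
  exact this.false

theorem expectedPayoffOfPure_lt {σ : ι → α → ℝ} (hσ : ∀ i a, 0 ≤ σ i a)
    (hsum : ∀ i, ∑ a, σ i a = 1) {u : (ι → α) → ℝ} {j : ι} {a b : α}
    (hdom : ∀ c : ι → α, (∀ i, i ≠ j → σ i (c i) ≠ 0) →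
      u (Function.update c j b) < u (Function.update c j a)) :
    expectedPayoffOfPure σ u j b < expectedPayoffOfPure σ u j a := by
  set w : ({i // i ≠ j} → α) → ℝ := fun d => ∏ i : {i // i ≠ j}, σ i (d i)
  have hw : ∀ d, 0 ≤ w d := fun d => Finset.prod_nonneg fun i _ => hσ i _
  have hw_sum : ∑ d, w d = 1 := by
    rw [← Fintype.prod_sum (fun (i : {i // i ≠ j}) a => σ i a)]
    exact Finset.prod_eq_one fun i _ => hsum i
  have hlt : ∀ d, w d ≠ 0 → u ((Equiv.funSplitAt j α).symm (b, d)) <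
      u ((Equiv.funSplitAt j α).symm (a, d)) := by
    intro d hd
    have := hdom ((Equiv.funSplitAt j α).symm (b, d)) fun i hi => by
      simpa [hi] using Finset.prod_ne_zero_iff.mp hd ⟨i, hi⟩ (Finset.mem_univ _)
    rwa [← funSplitAt_symm_eq_update, ← funSplitAt_symm_eq_update] at this
  obtain ⟨d₀, -, hd₀⟩ := Finset.exists_ne_zero_of_sum_ne_zero (hw_sum.trans_ne one_ne_zero)
  change ∑ d, w d * _ < ∑ d, w d * _
  refine Finset.sum_lt_sum (fun d _ => ?_) ⟨d₀, Finset.mem_univ _, ?_⟩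
  · rcases (hw d).eq_or_lt with hd | hd
    · rw [← hd, zero_mul, zero_mul]
    · exact mul_le_mul_of_nonneg_left (hlt d hd.ne').le hd.le
  · exact mul_lt_mul_of_pos_left (hlt d₀ hd₀) ((hw d₀).lt_of_ne' hd₀)

end MixedStrategies

theorem eq_of_apply_eq_one_of_apply_ne_zero {α : Type*} [Fintype α] [DecidableEq α] {p : α → ℝ}
    (hp : ∀ x, 0 ≤ p x) (hsum : ∑ x, p x = 1) {a : α} (ha : p a = 1) {x : α} (hx : p x ≠ 0) :
    x = a := by
  by_contra hxa
  have hrest : ∑ y ∈ Finset.univ.erase a, p y = 0 := by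
    linarith [Finset.add_sum_erase Finset.univ p (Finset.mem_univ a)]
  exact hx ((Finset.sum_eq_zero_iff_of_nonneg fun y _ => hp y).mp hrest x
    (Finset.mem_erase.mpr ⟨hxa, Finset.mem_univ x⟩))

section ImbalancedRPS

variable {m : ℕ} {c : Fin m → Fin 3} {j : Fin m}

theorem imbWinner_eq_zero (hR : ∃ i, c i = 0) (hS : ∃ i, c i = 2) : imbWinner c = 0 := by
  simp [imbWinner, hR, hS]

theorem imbWinner_eq_one (hS : ∀ i, c i ≠ 2) (hP : ∃ i, c i = 1) : imbWinner c = 1 := by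
  simp [imbWinner, hS, hP]

theorem imbWinner_ne_one (hS : ∃ i, c i = 2) : imbWinner c ≠ 1 := by
  unfold imbWinner
  split_ifs <;> simp_all

theorem imbWinner_const (j : Fin m) (a : Fin 3) : imbWinner (fun _ : Fin m => a) = a := by
  have : Nonempty (Fin m) := ⟨j⟩
  fin_cases a <;> simp [imbWinner]

theorem imbPayoff_of_ne_imbWinner (h : c j ≠ imbWinner c) : imbPayoff c j = -1 := by
  simp [imbPayoff, h]

theorem imbPayoff_nonneg (h : c j = imbWinner c) : 0 ≤ imbPayoff c j := by
  have hcard : ((Finset.univ.filter fun i => c i = imbWinner c).card : ℝ) ≤ m := by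
    exact_mod_cast (Finset.card_filter_le _ _).trans_eq (Finset.card_fin m)
  simp only [imbPayoff, if_pos h]
  exact div_nonneg (by linarith) (Nat.cast_nonneg _)

theorem imbPayoff_of_unique (h : c j = imbWinner c) (hu : ∀ i, i ≠ j → c i ≠ imbWinner c) :
    imbPayoff c j = m - 1 := by
  have hW : (Finset.univ.filter fun i => c i = imbWinner c) = {j} := by
    ext i
    by_cases hi : i = j
    · simp [hi, h]
    · simp [hi, hu i hi]
  simp [imbPayoff, h, hW]

theorem imbPayoff_const (j : Fin m) (a : Fin 3) : imbPayoff (fun _ : Fin m => a) j = 0 := by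
  simp [imbPayoff, imbWinner_const j]

theorem imbPayoff_update_one_of_forall_eq_zero (hR : ∀ i, i ≠ j → c i = 0) :
    imbPayoff (Function.update c j 1) j = m - 1 := by
  have hS : ∀ i, Function.update c j 1 i ≠ 2 := by
    intro i
    by_cases hi : i = j
    · simp [hi]
    · simp [hi, hR i hi]
  have hwin := imbWinner_eq_one hS ⟨j, Function.update_self j 1 c⟩
  refine imbPayoff_of_unique (by simp [hwin]) fun i hi => ?_
  simp [hi, hR i hi, hwin]

theorem imbPayoff_update_zero_lt_one (hm : 2 ≤ m) (hS : ∀ i, i ≠ j → c i ≠ 2) :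
    imbPayoff (Function.update c j 0) j < imbPayoff (Function.update c j 1) j := by
  by_cases hP : ∃ i, i ≠ j ∧ c i = 1
  · obtain ⟨i, hij, hi⟩ := hP
    have hwin : ∀ a : Fin 3, a ≠ 2 → imbWinner (Function.update c j a) = 1 := fun a ha =>
      imbWinner_eq_one (fun k => by by_cases hk : k = j <;> simp [hk, ha, hS])
        ⟨i, by simp [hij, hi]⟩
    rw [imbPayoff_of_ne_imbWinner (by simp [hwin 0 (by decide)])]
    linarith [imbPayoff_nonneg (c := Function.update c j 1) (j := j)
      (by simp [hwin 1 (by decide)])]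
  · have hR : ∀ i, i ≠ j → c i = 0 := fun i hi => by
      have h2 := hS i hi
      have h1 : c i ≠ 1 := fun h => hP ⟨i, hi, h⟩
      omega
    have hconst : Function.update c j 0 = fun _ => 0 := by
      ext i
      by_cases hi : i = j <;> simp [hi, hR]
    have hm' : (2 : ℝ) ≤ m := by exact_mod_cast hm
    rw [hconst, imbPayoff_const, imbPayoff_update_one_of_forall_eq_zero hR]
    linarith

theorem imbPayoff_update_one_lt_zero (hS : ∃ i, i ≠ j ∧ c i = 2) :
    imbPayoff (Function.update c j 1) j < imbPayoff (Function.update c j 0) j := by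
  obtain ⟨i, hij, hi⟩ := hS
  have hS' : ∀ a : Fin 3, ∃ k, Function.update c j a k = 2 := fun a => ⟨i, by simp [hij, hi]⟩
  rw [imbPayoff_of_ne_imbWinner (by simpa using (imbWinner_ne_one (hS' 1)).symm)]
  linarith [imbPayoff_nonneg (c := Function.update c j 0) (j := j)
    (by simp [imbWinner_eq_zero ⟨j, Function.update_self j 0 c⟩ (hS' 0)])]

theorem imbPayoff_update_two_lt_one (hm : 2 ≤ m) (hR : ∀ i, i ≠ j → c i = 0) :
    imbPayoff (Function.update c j 2) j < imbPayoff (Function.update c j 1) j := by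
  have : Nontrivial (Fin m) := Fin.nontrivial_iff_two_le.mpr hm
  obtain ⟨i, hij⟩ := exists_ne j
  have hwin : imbWinner (Function.update c j 2) = 0 :=
    imbWinner_eq_zero ⟨i, by simp [hij, hR i hij]⟩ ⟨j, Function.update_self j 2 c⟩
  have hm' : (2 : ℝ) ≤ m := by exact_mod_cast hm
  rw [imbPayoff_of_ne_imbWinner (by simp [hwin]), imbPayoff_update_one_of_forall_eq_zero hR]
  linarith

end ImbalancedRPS

theorem IsNashEq.eq_zero_of_dominated {m : ℕ} {σ : Fin m → Fin 3 → ℝ} (hne : IsNashEq σ)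
    {j : Fin m} {a b : Fin 3}
    (hdom : ∀ c : Fin m → Fin 3, (∀ i, i ≠ j → σ i (c i) ≠ 0) →
      imbPayoff (Function.update c j b) j < imbPayoff (Function.update c j a) j) :
    σ j b = 0 := by
  have hbest :
      ∀ x, expectedPayoffOfPure σ (imbPayoff · j) j x ≤ expectedPayoff σ (imbPayoff · j) :=
    fun x => by
      rw [← expectedPayoff_update_single]
      exact hne.2 j (Pi.single x 1) (fun o => by by_cases h : o = x <;> simp [h]) (by simp)
  exact eq_zero_of_expectedPayoffOfPure_lt (hne.1 j).1 (hne.1 j).2 hbest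
    (expectedPayoffOfPure_lt (fun i => (hne.1 i).1) (fun i => (hne.1 i).2) hdom)

theorem stmt_15_general (m : ℕ) (hm : 2 ≤ m) (σ : Fin m → Fin 3 → ℝ)
    (qs : Fin m)
    (honly : ∀ i : Fin m, i ≠ qs → σ i 2 = 0) :
    (IsNashEq σ → σ qs 0 = 0) ∧
    (σ qs 2 = 1 → ¬ IsNashEq σ) := by
  refine ⟨fun hne => hne.eq_zero_of_dominated (a := 1) fun c hc => ?_, fun hS hne => ?_⟩
  · exact imbPayoff_update_zero_lt_one hm fun i hi h2 => hc i hi (h2 ▸ honly i hi)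
  have hqs : ∀ x, σ qs x ≠ 0 → x = 2 := fun x =>
    eq_of_apply_eq_one_of_apply_ne_zero (hne.1 qs).1 (hne.1 qs).2 hS
  have hP : ∀ i, i ≠ qs → σ i 1 = 0 := fun i hi =>
    hne.eq_zero_of_dominated (a := 0) fun c hc =>
      imbPayoff_update_one_lt_zero ⟨qs, Ne.symm hi, hqs _ (hc qs (Ne.symm hi))⟩
  have hR : ∀ i, i ≠ qs → ∀ x, σ i x ≠ 0 → x = 0 := fun i hi x hx => by
    have h1 : x ≠ 1 := by rintro rfl; exact hx (hP i hi)
    have h2 : x ≠ 2 := by rintro rfl; exact hx (honly i hi)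
    omega
  have hS0 : σ qs 2 = 0 := hne.eq_zero_of_dominated (a := 1) fun c hc =>
    imbPayoff_update_two_lt_one hm fun i hi => hR i hi _ (hc i hi)
  exact zero_ne_one (hS0.symm.trans hS)

/-- If at most one player `qs` can play `S` (object `2`), then in any Nash
equilibrium `qs` does not play `R` (object `0`); and if `qs` plays pure `S`,
the profile is not a Nash equilibrium. -/
theorem stmt_15 (m : ℕ) (hm : 2 ≤ m) (σ : Fin m → Fin 3 → ℝ)
    (hprof : IsMixedProfile σ) (qs : Fin m)
    (honly : ∀ i : Fin m, i ≠ qs → σ i 2 = 0) :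
    (IsNashEq σ → σ qs 0 = 0) ∧
    (σ qs 2 = 1 → ¬ IsNashEq σ) :=
  stmt_15_general m hm σ qs honly
end
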